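/- Let K be a ramified quadratic field extension of ℚ₂. Then the 2-adic valuation of the discriminant of K/ℚ₂ is either 2 or 3. -/

import Mathlib

/-!
`hδ` says that the inverse different of `K/ℚ₂` is `𝔭_K^{-δ}`. Let `π` be a uniformizer. Since
`v π` is odd while `v` takes even values on `ℚ₂ˣ`, the two terms of `a + bπ` (`a, b ∈ ℚ₂`) never
have equal valuations; hence `1, π` is a `ℚ₂`-basis of `K`, `a + bπ` is integral iff `a, b ∈ ℤ₂`,
and the relation `π² - Tr(π) π + N(π) = 0` forces `Tr π ∈ 2ℤ₂`. So `Tr(a + bπ) = 2a + b Tr π`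
lies in `2ℤ₂` for every integral element: `1/2` is in the inverse different and `δ ≥ 2`. On the
other hand `Tr(1/4) = 1/2 ∉ ℤ₂`, so `1/4` is not, and `δ ≤ 3`.
-/

/-- The normalized discrete valuation on a finite extension `K` of `ℚ_p`, together with
the ramification index `e`.  (Such data exists and is unique for every finite extension.) -/
structure PadicValData (p : ℕ) [Fact p.Prime] (K : Type*) [Field K] [Algebra ℚ_[p] K] where
  /-- the normalized valuation (with junk value at `0`) -/
  v : K → ℤ
  /-- the ramification index of `K/ℚ_p` -/
  e : ℕ
  v_mul : ∀ x y : K, x ≠ 0 → y ≠ 0 → v (x * y) = v x + v y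
  v_add : ∀ x y : K, x ≠ 0 → y ≠ 0 → x + y ≠ 0 → min (v x) (v y) ≤ v (x + y)
  v_surj : ∀ n : ℤ, ∃ x : K, x ≠ 0 ∧ v x = n
  v_compat : ∀ x : ℚ_[p], x ≠ 0 → v (algebraMap ℚ_[p] K x) = (e : ℤ) * x.valuation

theorem Padic.norm_le_norm_p_iff {p : ℕ} [Fact p.Prime] {x : ℚ_[p]} (hx : x ≠ 0) :
    ‖x‖ ≤ ‖(p : ℚ_[p])‖ ↔ 0 < x.valuation := by
  rw [Padic.norm_eq_zpow_neg_valuation hx, Padic.norm_p, ← zpow_neg_one,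
    zpow_le_zpow_iff_right₀ (mod_cast (Fact.out : p.Prime).one_lt)]
  omega

theorem Algebra.sq_sub_trace_mul_add_norm {R S : Type*} [CommRing R] [Nontrivial R] [CommRing S]
    [Algebra R S] [Module.Free R S] (h : Module.finrank R S = 2) (x : S) :
    x ^ 2 - algebraMap R S (Algebra.trace R S x) * x + algebraMap R S (Algebra.norm R x) = 0 := by
  have : Module.Finite R S := Module.finite_of_finrank_eq_succ h
  let b := Module.finBasisOfFinrankEq R S h
  apply Algebra.leftMulMatrix_injective b
  have := Matrix.aeval_self_charpoly (Algebra.leftMulMatrix b x)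
  rw [Matrix.charpoly_fin_two] at this
  simpa [Algebra.trace_eq_matrix_trace b, Algebra.norm_eq_matrix_det b, Algebra.smul_def] using this

theorem Algebra.exists_eq_algebraMap_add_mul {F L : Type*} [Field F] [Ring L] [Algebra F L]
    (h : Module.finrank F L = 2) {x : L} (hx : x ∉ Set.range (algebraMap F L)) (y : L) :
    ∃ a b : F, y = algebraMap F L a + algebraMap F L b * x := by
  have : FiniteDimensional F L := Module.finite_of_finrank_eq_succ h
  have : Nontrivial L := Module.nontrivial_of_finrank_eq_succ h
  have hli : LinearIndependent F ![x, 1] :=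
    linearIndependent_fin2.2 ⟨one_ne_zero, fun a ha ↦ hx ⟨a, by simpa [Algebra.smul_def] using ha⟩⟩
  have hspan := hli.span_eq_top_of_card_eq_finrank' (by simp [h])
  rw [Matrix.range_cons, Matrix.range_cons, Matrix.range_empty, Set.union_empty,
    Set.singleton_union] at hspan
  obtain ⟨b, a, hab⟩ := Submodule.mem_span_pair.1 (hspan ▸ Submodule.mem_top : y ∈ _)
  exact ⟨a, b, by rw [← hab, Algebra.smul_def, Algebra.smul_def, mul_one, add_comm]⟩

namespace PadicValData

section

variable {p : ℕ} [Fact p.Prime] {K : Type*} [Field K] [Algebra ℚ_[p] K] (D : PadicValData p K)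

theorem v_one : D.v 1 = 0 := by
  have h := D.v_mul 1 1 one_ne_zero one_ne_zero
  rw [mul_one] at h
  omega

theorem v_neg (x : K) : D.v (-x) = D.v x := by
  rcases eq_or_ne x 0 with rfl | hx
  · rw [neg_zero]
  have h := D.v_mul (-1) (-1) (by norm_num) (by norm_num)
  rw [neg_mul_neg, one_mul, v_one] at h
  rw [← neg_one_mul, D.v_mul _ _ (by norm_num) hx]
  omega

theorem v_add_eq_min_of_ne {x y : K} (hx : x ≠ 0) (hy : y ≠ 0) (h : D.v x ≠ D.v y) :
    x + y ≠ 0 ∧ D.v (x + y) = min (D.v x) (D.v y) := by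
  wlog hlt : D.v x < D.v y generalizing x y
  · rw [add_comm, min_comm]
    exact this hy hx h.symm (by omega)
  have hxy : x + y ≠ 0 := by
    intro h0
    rw [eq_neg_of_add_eq_zero_right h0, v_neg] at hlt
    exact lt_irrefl _ hlt
  refine ⟨hxy, le_antisymm ?_ (D.v_add x y hx hy hxy)⟩
  have := D.v_add (x + y) (-y) hxy (neg_ne_zero.2 hy) (by rwa [add_neg_cancel_right])
  rw [add_neg_cancel_right, v_neg] at this
  omega

variable {D}

theorem v_algebraMap (hram : D.e = 2) {a : ℚ_[p]} (ha : a ≠ 0) :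
    D.v (algebraMap ℚ_[p] K a) = 2 * a.valuation := by
  rw [D.v_compat a ha, hram, Nat.cast_ofNat]

theorem v_algebraMap_add_of_odd (hram : D.e = 2) {a : ℚ_[p]} {w : K} (ha : a ≠ 0) (hw : w ≠ 0)
    (hodd : Odd (D.v w)) :
    algebraMap ℚ_[p] K a + w ≠ 0 ∧
      D.v (algebraMap ℚ_[p] K a + w) = min (2 * a.valuation) (D.v w) := by
  rw [← v_algebraMap hram ha]
  refine D.v_add_eq_min_of_ne (by simpa using ha) hw ?_
  rw [v_algebraMap hram ha]
  obtain ⟨k, hk⟩ := hodd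
  omega

theorem v_algebraMap_mul (hram : D.e = 2) {b : ℚ_[p]} {x : K} (hb : b ≠ 0) (hx : x ≠ 0) :
    D.v (algebraMap ℚ_[p] K b * x) = 2 * b.valuation + D.v x := by
  rw [D.v_mul _ _ (by simpa using hb) hx, v_algebraMap hram hb]

theorem notMem_range_algebraMap_of_odd (hram : D.e = 2) {x : K} (hx : x ≠ 0)
    (hodd : Odd (D.v x)) : x ∉ Set.range (algebraMap ℚ_[p] K) := by
  rintro ⟨a, rfl⟩
  rw [v_algebraMap hram (by rintro rfl; simp at hx)] at hodd
  exact Int.not_odd_iff_even.2 (even_two_mul _) hodd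

theorem norm_trace_le_norm_p_of_v_eq_one (hquad : Module.finrank ℚ_[p] K = 2)
    (hram : D.e = 2) {π : K} (hπ0 : π ≠ 0) (hπ : D.v π = 1) :
    ‖Algebra.trace ℚ_[p] K π‖ ≤ ‖(p : ℚ_[p])‖ := by
  set t := Algebra.trace ℚ_[p] K π
  set N := Algebra.norm ℚ_[p] π
  rcases eq_or_ne t 0 with ht | ht
  · simp [ht]
  rw [Padic.norm_le_norm_p_iff ht]
  have hrel : algebraMap ℚ_[p] K N + -(algebraMap ℚ_[p] K t * π) = -π ^ 2 := by
    linear_combination Algebra.sq_sub_trace_mul_add_norm hquad π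
  have htπ : -(algebraMap ℚ_[p] K t * π) ≠ 0 := by simpa using ⟨ht, hπ0⟩
  have hvtπ : D.v (-(algebraMap ℚ_[p] K t * π)) = 2 * t.valuation + 1 := by
    rw [D.v_neg, v_algebraMap_mul hram ht hπ0, hπ]
  have hvπ2 : D.v (-π ^ 2) = 2 := by
    rw [D.v_neg, sq, D.v_mul π π hπ0 hπ0, hπ]; rfl
  rcases eq_or_ne N 0 with hN | hN
  · rw [hN, map_zero, zero_add] at hrel
    rw [hrel, hvπ2] at hvtπ
    omega
  · have := (v_algebraMap_add_of_odd hram hN htπ (by rw [hvtπ]; exact odd_two_mul_add_one _)).2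
    rw [hrel, hvπ2, hvtπ] at this
    omega

theorem norm_le_one_of_integral_algebraMap_add_mul (hram : D.e = 2) {π : K} (hπ0 : π ≠ 0)
    (hπ : D.v π = 1) {a b : ℚ_[p]}
    (hy : algebraMap ℚ_[p] K a + algebraMap ℚ_[p] K b * π = 0 ∨
      0 ≤ D.v (algebraMap ℚ_[p] K a + algebraMap ℚ_[p] K b * π)) :
    ‖a‖ ≤ 1 ∧ ‖b‖ ≤ 1 := by
  simp only [Padic.norm_le_one_iff_val_nonneg]
  rcases eq_or_ne b 0 with rfl | hb
  · refine ⟨?_, by simp⟩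
    rcases eq_or_ne a 0 with rfl | ha
    · simp
    simp only [map_zero, zero_mul, add_zero, map_eq_zero_iff _ (algebraMap ℚ_[p] K).injective,
      ha, false_or, v_algebraMap hram ha] at hy
    omega
  have hbπ : algebraMap ℚ_[p] K b * π ≠ 0 := by simpa using ⟨hb, hπ0⟩
  have hvbπ := v_algebraMap_mul hram hb hπ0
  rw [hπ] at hvbπ
  rcases eq_or_ne a 0 with rfl | ha
  · simp only [map_zero, zero_add, hbπ, false_or, hvbπ] at hy
    exact ⟨by simp, by omega⟩
  obtain ⟨hne, hv⟩ :=
    v_algebraMap_add_of_odd hram ha hbπ (by rw [hvbπ]; exact odd_two_mul_add_one _)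
  rw [hv, hvbπ] at hy
  have := hy.resolve_left hne
  omega

end

theorem norm_trace_le_norm_two {K : Type*} [Field K] [Algebra ℚ_[2] K]
    (hquad : Module.finrank ℚ_[2] K = 2) {D : PadicValData 2 K} (hram : D.e = 2) {y : K}
    (hy : y = 0 ∨ 0 ≤ D.v y) : ‖Algebra.trace ℚ_[2] K y‖ ≤ ‖(2 : ℚ_[2])‖ := by
  obtain ⟨π, hπ0, hπ⟩ := D.v_surj 1
  obtain ⟨a, b, rfl⟩ := Algebra.exists_eq_algebraMap_add_mul hquad
    (notMem_range_algebraMap_of_odd hram hπ0 (by rw [hπ]; exact odd_one)) y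
  obtain ⟨ha, hb⟩ := norm_le_one_of_integral_algebraMap_add_mul hram hπ0 hπ hy
  have htrace : Algebra.trace ℚ_[2] K (algebraMap ℚ_[2] K a + algebraMap ℚ_[2] K b * π) =
      2 * a + b * Algebra.trace ℚ_[2] K π := by
    rw [map_add, Algebra.trace_algebraMap, hquad, ← smul_eq_mul b, ← Algebra.smul_def,
      LinearMap.map_smul, nsmul_eq_mul, Nat.cast_ofNat]
  have hπtr := norm_trace_le_norm_p_of_v_eq_one hquad hram hπ0 hπ
  rw [Nat.cast_ofNat] at hπtr
  rw [htrace]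
  refine (Padic.nonarchimedean _ _).trans (max_le ?_ ?_) <;> rw [norm_mul]
  · exact mul_le_of_le_one_right (norm_nonneg _) ha
  · exact (mul_le_of_le_one_left (norm_nonneg _) hb).trans hπtr

end PadicValData

/-- Let `K/ℚ₂` be a ramified quadratic extension.  Then the `2`-adic
valuation `δ` of the discriminant of `K/ℚ₂` is either `2` or `3`. -/
theorem discr_valuation_ramified_quadratic_two (K : Type*) [Field K] [Algebra ℚ_[2] K]
    (hquad : Module.finrank ℚ_[2] K = 2) (D : PadicValData 2 K) (hram : D.e = 2)
    (δ : ℕ)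
    (hδ : ∀ x : K, (∀ y : K, (y = 0 ∨ 0 ≤ D.v y) →
        ‖Algebra.trace ℚ_[2] K (x * y)‖ ≤ 1) ↔ (x = 0 ∨ -(δ : ℤ) ≤ D.v x)) :
    δ = 2 ∨ δ = 3 := by
  have hnorm_two : 0 < ‖(2 : ℚ_[2])‖ ∧ ‖(2 : ℚ_[2])‖ < 1 :=
    ⟨norm_pos_iff.2 two_ne_zero, by simpa using Padic.norm_p_lt_one (p := 2)⟩
  have hlower : 2 ≤ δ := by
    have hmem := (hδ (algebraMap ℚ_[2] K 2⁻¹)).1 fun y hy ↦ by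
      rw [← Algebra.smul_def, map_smul, norm_smul, norm_inv,
        inv_mul_le_one₀ hnorm_two.1]
      exact PadicValData.norm_trace_le_norm_two hquad hram hy
    rw [PadicValData.v_algebraMap hram (inv_ne_zero two_ne_zero), Padic.valuation_inv,
      Padic.valuation_ofNat, padicValNat_self] at hmem
    have := hmem.resolve_left (by simp)
    omega
  have hupper : δ ≤ 3 := by
    by_contra! hδ4
    have hmem := (hδ (algebraMap ℚ_[2] K (2 ^ 2)⁻¹)).2 (Or.inr ?_) 1 (Or.inr D.v_one.ge)
    · rw [mul_one, Algebra.trace_algebraMap, hquad,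
        show (2 • ((2 : ℚ_[2]) ^ 2)⁻¹) = 2⁻¹ by norm_num, norm_inv,
        inv_le_one₀ hnorm_two.1] at hmem
      exact hmem.not_gt hnorm_two.2
    · rw [PadicValData.v_algebraMap hram (by norm_num), Padic.valuation_inv,
        Padic.valuation_pow, Padic.valuation_ofNat, padicValNat_self]
      omega
  omega
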